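/- Let (G,w,A,B) be a normalized instance, let (U_i,V_i,e_i)_{i∈I} be a consistent family of tail changes each of size at most N, with A_r = A \ ∪_i U_i and B_r = B \ ∪_i V_i. Let X ⊆ B_r satisfy w(X) > w(N(X,A_r)), or w(X) = w(N(X,A_r)) and |X ∩ B''| > |N(X, A_r) ∩ A''|. Then there exists a local improvement of A in G of size at most |X|·(3N+1). -/

import Mathlib

open scoped Classical

variable {V : Type*}

noncomputable def nbhd (G : SimpleGraph V) (X A : Finset V) : Finset V :=
  A.filter (fun a => a ∈ X ∨ ∃ x ∈ X, G.Adj x a)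

noncomputable def wsum (w : V → ℕ) (X : Finset V) : ℕ := ∑ v ∈ X, w v

def IsLocalImprovement (G : SimpleGraph V) (w : V → ℕ) (A X : Finset V) : Prop :=
  wsum w X > wsum w (nbhd G X A) ∨
    (wsum w X = wsum w (nbhd G X A) ∧
      ((nbhd G X A).filter (fun v => w v = 2)).card < (X.filter (fun v => w v = 2)).card)


/-!
Put back the tail changes that `X` touches: with `I` the set of `i` such that `U_i` meets
`N(X, A)`, take `Y = X ∪ ⋃_{i ∈ I} V_i`. Score a vertex set by its weight and its number of
weight-2 vertices, compared lexicographically; a local improvement is a set whose neighbourhood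
scores less than itself. As `N(V_i, A) ⊆ U_i`, `N(Y, A)` lies in `N(X, A_r) ∪ ⋃_{i ∈ I} U_i`, and
with weights in `{1, 2}` a tail change has `U_i` and `V_i` of equal score, so `Y` beats its
neighbourhood by as much as `X` beats `N(X, A_r)`. Since `A` is independent and `G` has no
4-claw, `|N(X, A)| ≤ 3|X|`; the `U_i` are disjoint, so `|I| ≤ 3|X|` and `|Y| ≤ |X| (3N + 1)`.
-/

section

open Finset Function

variable {G : SimpleGraph V}

lemma mem_nbhd {X A : Finset V} {a : V} :
    a ∈ nbhd G X A ↔ a ∈ A ∧ (a ∈ X ∨ ∃ x ∈ X, G.Adj x a) :=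
  mem_filter

lemma nbhd_union (X Y A : Finset V) : nbhd G (X ∪ Y) A = nbhd G X A ∪ nbhd G Y A := by
  ext a
  simp only [mem_nbhd, mem_union]
  grind

lemma nbhd_biUnion {ι : Type*} (I : Finset ι) (X : ι → Finset V) (A : Finset V) :
    nbhd G (I.biUnion X) A = I.biUnion fun i => nbhd G (X i) A := by
  ext a
  simp only [mem_nbhd, mem_biUnion]
  grind

lemma nbhd_subset (X A : Finset V) : nbhd G X A ⊆ A :=
  filter_subset _ _

lemma nbhd_sdiff (X A S : Finset V) : nbhd G X (A \ S) = nbhd G X A \ S := by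
  ext a
  simp only [mem_nbhd, mem_sdiff]
  tauto

lemma nbhd_eq_biUnion_of_disjoint {X A : Finset V} (h : Disjoint X A) :
    nbhd G X A = X.biUnion fun x => A.filter (G.Adj x) := by
  ext a
  simp only [mem_nbhd, mem_biUnion, mem_filter]
  have : a ∈ A → a ∉ X := fun ha hx => disjoint_left.1 h hx ha
  grind

def score (w : V → ℕ) (S : Finset V) : ℕ ×ₗ ℕ :=
  ∑ v ∈ S, toLex (w v, if w v = 2 then 1 else 0)

lemma score_eq (w : V → ℕ) (S : Finset V) :
    score w S = toLex (wsum w S, #(S.filter fun v => w v = 2)) :=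
  Prod.ext (Prod.fst_sum ..) ((Prod.snd_sum ..).trans (card_filter ..).symm)

lemma score_mono (w : V → ℕ) {S T : Finset V} (h : S ⊆ T) : score w S ≤ score w T :=
  sum_le_sum_of_subset_of_nonneg h fun _ _ _ => Prod.Lex.toLex_mono zero_le

lemma score_union (w : V → ℕ) {S T : Finset V} (h : Disjoint S T) :
    score w (S ∪ T) = score w S + score w T :=
  sum_union h

lemma score_biUnion (w : V → ℕ) {ι : Type*} {I : Finset ι} {S : ι → Finset V}
    (h : (I : Set ι).PairwiseDisjoint S) : score w (I.biUnion S) = ∑ i ∈ I, score w (S i) :=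
  sum_biUnion h

lemma isLocalImprovement_iff {w : V → ℕ} {A X : Finset V} :
    IsLocalImprovement G w A X ↔ score w (nbhd G X A) < score w X := by
  rw [IsLocalImprovement, score_eq, score_eq, Prod.Lex.toLex_lt_toLex]
  omega

lemma wsum_eq_card_add_card_filter {w : V → ℕ} (hw : ∀ v, w v = 1 ∨ w v = 2) (S : Finset V) :
    wsum w S = #S + #(S.filter fun v => w v = 2) := by
  rw [wsum, card_eq_sum_ones, card_filter, ← sum_add_distrib]
  exact sum_congr rfl fun v _ => by rcases hw v with h | h <;> simp [h]

lemma score_eq_of_card_eq_of_wsum_eq {w : V → ℕ} (hw : ∀ v, w v = 1 ∨ w v = 2)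
    {S T : Finset V} (hcard : #S = #T) (hwsum : wsum w S = wsum w T) :
    score w S = score w T := by
  have hS := wsum_eq_card_add_card_filter hw S
  have hT := wsum_eq_card_add_card_filter hw T
  rw [score_eq, score_eq, hwsum]
  congr 2
  omega

lemma isLocalImprovement_union_biUnion {ι : Type*} [Fintype ι] {w : V → ℕ} {A X : Finset V}
    {U W : ι → Finset V} {I : Finset ι}
    (hU : Pairwise (Disjoint on U)) (hW : Pairwise (Disjoint on W))
    (hscore : ∀ i, score w (U i) = score w (W i)) (hNW : ∀ i, nbhd G (W i) A ⊆ U i)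
    (hI : ∀ i, ¬ Disjoint (U i) (nbhd G X A) → i ∈ I) (hXW : Disjoint X (I.biUnion W))
    (hX : IsLocalImprovement G w (A \ univ.biUnion U) X) :
    IsLocalImprovement G w A (X ∪ I.biUnion W) := by
  set Ar := A \ univ.biUnion U
  have hcover : nbhd G (X ∪ I.biUnion W) A ⊆ nbhd G X Ar ∪ I.biUnion U := by
    rw [nbhd_union, nbhd_biUnion]
    refine union_subset (fun a ha => ?_)
      ((biUnion_mono fun i _ => hNW i).trans subset_union_right)
    by_cases haU : a ∈ univ.biUnion U
    · obtain ⟨i, -, hai⟩ := mem_biUnion.1 haU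
      exact mem_union_right _ (mem_biUnion.2 ⟨i, hI i (not_disjoint_iff.2 ⟨a, hai, ha⟩), hai⟩)
    · exact mem_union_left _ (by rw [nbhd_sdiff]; exact mem_sdiff.2 ⟨ha, haU⟩)
  have hdisj : Disjoint (nbhd G X Ar) (I.biUnion U) :=
    disjoint_of_subset_left (nbhd_subset _ _) (disjoint_sdiff_self_left.mono_right
      (biUnion_subset_biUnion_of_subset_left _ (subset_univ I)))
  rw [isLocalImprovement_iff] at hX ⊢
  calc score w (nbhd G (X ∪ I.biUnion W) A)
      _ ≤ score w (nbhd G X Ar ∪ I.biUnion U) := score_mono w hcover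
      _ = score w (nbhd G X Ar) + ∑ i ∈ I, score w (U i) := by
        rw [score_union w hdisj, score_biUnion w (hU.set_pairwise _)]
      _ < score w X + ∑ i ∈ I, score w (W i) :=
        add_lt_add_of_lt_of_le hX (sum_congr rfl fun i _ => hscore i).le
      _ = score w (X ∪ I.biUnion W) := by
        rw [score_union w hXW, score_biUnion w (hW.set_pairwise _)]

section Bipartite

variable {A B : Finset V}

lemma not_adj_of_mem_left (hAB : Disjoint A B)
    (hbip : ∀ u v : V, G.Adj u v → (u ∈ A ∧ v ∈ B) ∨ (u ∈ B ∧ v ∈ A))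
    {u v : V} (hu : u ∈ A) (hv : v ∈ A) : ¬ G.Adj u v := fun h => by
  rcases hbip u v h with ⟨-, hvB⟩ | ⟨huB, -⟩
  · exact disjoint_left.1 hAB hv hvB
  · exact disjoint_left.1 hAB hu huB

lemma not_adj_of_mem_right (hAB : Disjoint A B)
    (hbip : ∀ u v : V, G.Adj u v → (u ∈ A ∧ v ∈ B) ∨ (u ∈ B ∧ v ∈ A))
    {u v : V} (hu : u ∈ B) (hv : v ∈ B) : ¬ G.Adj u v :=
  not_adj_of_mem_left hAB.symm (fun u v h => (hbip u v h).symm) hu hv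

lemma card_nbhd_le_three_mul (hAB : Disjoint A B)
    (hbip : ∀ u v : V, G.Adj u v → (u ∈ A ∧ v ∈ B) ∨ (u ∈ B ∧ v ∈ A))
    (h4claw : ¬ ∃ (c : V) (T : Finset V), T.card = 4 ∧ (∀ t ∈ T, G.Adj c t) ∧
      (∀ t₁ ∈ T, ∀ t₂ ∈ T, t₁ ≠ t₂ → ¬ G.Adj t₁ t₂))
    {X : Finset V} (hXB : X ⊆ B) : #(nbhd G X A) ≤ 3 * #X := by
  have hdeg (x : V) : #(A.filter (G.Adj x)) ≤ 3 := by
    by_contra! h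
    obtain ⟨T, hTA, hT⟩ := exists_subset_card_eq (show 4 ≤ #(A.filter (G.Adj x)) by omega)
    refine h4claw ⟨x, T, hT, fun t ht => (mem_filter.1 (hTA ht)).2, fun t₁ ht₁ t₂ ht₂ _ => ?_⟩
    exact not_adj_of_mem_left hAB hbip (filter_subset _ _ (hTA ht₁)) (filter_subset _ _ (hTA ht₂))
  rw [nbhd_eq_biUnion_of_disjoint (hAB.symm.mono_left hXB)]
  calc #(X.biUnion fun x => A.filter (G.Adj x))
      _ ≤ ∑ x ∈ X, #(A.filter (G.Adj x)) := card_biUnion_le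
      _ ≤ ∑ _x ∈ X, 3 := sum_le_sum fun x _ => hdeg x
      _ = 3 * #X := by rw [sum_const, smul_eq_mul, mul_comm]

end Bipartite

lemma card_filter_not_disjoint_le {ι : Type*} {I : Finset ι} {U : ι → Finset V}
    (hU : (I : Set ι).PairwiseDisjoint U) (S : Finset V) :
    #(I.filter fun i => ¬ Disjoint (U i) S) ≤ #S := by
  calc #(I.filter fun i => ¬ Disjoint (U i) S)
      _ ≤ #((I.filter fun i => ¬ Disjoint (U i) S).biUnion fun i => U i ∩ S) :=
        card_le_card_biUnion (fun i hi j hj hij => ((hU (mem_filter.1 hi).1 (mem_filter.1 hj).1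
          hij).mono inter_subset_left inter_subset_left))
          fun i hi => not_disjoint_iff_nonempty_inter.1 (mem_filter.1 hi).2
      _ ≤ #S := card_le_card (biUnion_subset.2 fun _ _ => inter_subset_right)

lemma card_union_biUnion_le {ι : Type*} {X : Finset V} {I : Finset ι} {W : ι → Finset V}
    {k N : ℕ} (hW : ∀ i, #(W i) ≤ N) (hI : #I ≤ k * #X) :
    #(X ∪ I.biUnion W) ≤ #X * (k * N + 1) := by
  calc #(X ∪ I.biUnion W)
      _ ≤ #X + ∑ i ∈ I, #(W i) := (card_union_le _ _).trans (Nat.add_le_add_left card_biUnion_le _)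
      _ ≤ #X + #I * N := Nat.add_le_add_left (sum_le_card_nsmul _ _ _ fun i _ => hW i) _
      _ ≤ #X * (k * N + 1) := by nlinarith

end

theorem local_improvement_from_reduced_general {ι : Type*} [Fintype ι]
    (G : SimpleGraph V) (w : V → ℕ) (hw : ∀ v, w v = 1 ∨ w v = 2)
    (A B : Finset V)
    (hAB : Disjoint A B)
    (hbip : ∀ u v : V, G.Adj u v → (u ∈ A ∧ v ∈ B) ∨ (u ∈ B ∧ v ∈ A))
    (h4claw : ¬ ∃ (c : V) (T : Finset V), T.card = 4 ∧ (∀ t ∈ T, G.Adj c t) ∧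
        (∀ t₁ ∈ T, ∀ t₂ ∈ T, t₁ ≠ t₂ → ¬ G.Adj t₁ t₂))
    -- consistent family of tail changes, each of size at most N
    (N : ℕ) (Ui Vi : ι → Finset V)
    (hVsub : ∀ i, Vi i ⊆ B)
    (hcardEq : ∀ i, (Ui i).card = (Vi i).card)
    (hwEq : ∀ i, wsum w (Ui i) = wsum w (Vi i))
    (hNV : ∀ i, nbhd G (Vi i) A ⊆ Ui i)
    (hsizeN : ∀ i, (Ui i).card ≤ N)
    (hcons : ∀ i j : ι, i ≠ j → Disjoint (Ui i) (Ui j) ∧ Disjoint (Vi i) (Vi j))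
    (Ar Br : Finset V)
    (hAr : Ar = A \ Finset.univ.biUnion Ui)
    (hBr : Br = B \ Finset.univ.biUnion Vi)
    (X : Finset V) (hXsub : X ⊆ Br)
    (hX : wsum w X > wsum w (nbhd G X Ar) ∨
      (wsum w X = wsum w (nbhd G X Ar) ∧
        ((nbhd G X Ar).filter (fun v => w v = 2)).card
          < (X.filter (fun v => w v = 2)).card)) :
    ∃ Y : Finset V, Y.card ≤ X.card * (3 * N + 1) ∧
      (∀ x ∈ Y, ∀ y ∈ Y, ¬ G.Adj x y) ∧
      IsLocalImprovement G w A Y := by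
  subst hAr hBr
  have hU : Pairwise (Function.onFun Disjoint Ui) := fun i j hij => (hcons i j hij).1
  have hV : Pairwise (Function.onFun Disjoint Vi) := fun i j hij => (hcons i j hij).2
  set I := Finset.univ.filter fun i => ¬ Disjoint (Ui i) (nbhd G X A)
  have hXB : X ⊆ B := hXsub.trans Finset.sdiff_subset
  have hI : I.card ≤ 3 * X.card :=
    (card_filter_not_disjoint_le (hU.set_pairwise _) _).trans
      (card_nbhd_le_three_mul hAB hbip h4claw hXB)
  have hYB : X ∪ I.biUnion Vi ⊆ B :=
    Finset.union_subset hXB (Finset.biUnion_subset.2 fun i _ => hVsub i)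
  have hXV : Disjoint X (I.biUnion Vi) :=
    Finset.disjoint_of_subset_left hXsub (Finset.sdiff_disjoint.mono_right
      (Finset.biUnion_subset_biUnion_of_subset_left _ (Finset.subset_univ I)))
  refine ⟨X ∪ I.biUnion Vi, card_union_biUnion_le (fun i => hcardEq i ▸ hsizeN i) hI,
    fun x hx y hy => not_adj_of_mem_right hAB hbip (hYB hx) (hYB hy), ?_⟩
  exact isLocalImprovement_union_biUnion hU hV
    (fun i => score_eq_of_card_eq_of_wsum_eq hw (hcardEq i) (hwEq i)) hNV
    (fun i hi => Finset.mem_filter.2 ⟨Finset.mem_univ i, hi⟩) hXV hX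

/-- Normalized instance `(G, w, A, B)`, consistent family of tail
changes `(U_i, V_i, e_i)` each of size at most `N`, `A_r = A \ ⋃ U_i`,
`B_r = B \ ⋃ V_i`.  If `X ⊆ B_r` satisfies `w(X) > w(N(X, A_r))`, or
`w(X) = w(N(X, A_r))` with strictly more weight-2 vertices in `X` than in `N(X, A_r)`,
then there is a local improvement of `A` in `G` of size at most `|X| · (3N + 1)`. -/
theorem local_improvement_from_reduced {ι : Type*} [Fintype ι] [Fintype V]
    (G : SimpleGraph V) (w : V → ℕ) (hw : ∀ v, w v = 1 ∨ w v = 2)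
    (A B : Finset V)
    (hV : ∀ v : V, v ∈ A ∨ v ∈ B)
    (hAB : Disjoint A B)
    (hbip : ∀ u v : V, G.Adj u v → (u ∈ A ∧ v ∈ B) ∨ (u ∈ B ∧ v ∈ A))
    (h4claw : ¬ ∃ (c : V) (T : Finset V), T.card = 4 ∧ (∀ t ∈ T, G.Adj c t) ∧
        (∀ t₁ ∈ T, ∀ t₂ ∈ T, t₁ ≠ t₂ → ¬ G.Adj t₁ t₂))
    (h3claw : ∀ (c : V) (T : Finset V), T.card = 3 → (∀ t ∈ T, G.Adj c t) →
        (∀ t₁ ∈ T, ∀ t₂ ∈ T, t₁ ≠ t₂ → ¬ G.Adj t₁ t₂) → w c = 2)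
    (hlight : ∀ u v : V, w u = 1 → w v = 1 → ¬ G.Adj u v)
    -- consistent family of tail changes, each of size at most N
    (N : ℕ) (Ui Vi : ι → Finset V) (ei : ι → Sym2 V)
    (hUsub : ∀ i, Ui i ⊆ A) (hVsub : ∀ i, Vi i ⊆ B)
    (hcardEq : ∀ i, (Ui i).card = (Vi i).card)
    (hwEq : ∀ i, wsum w (Ui i) = wsum w (Vi i))
    (hNV : ∀ i, nbhd G (Vi i) A ⊆ Ui i)
    (hincident : ∀ i, ∃ u ∈ Ui i, u ∈ ei i)
    (hsizeN : ∀ i, (Ui i).card ≤ N)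
    (hcons : ∀ i j : ι, i ≠ j → Disjoint (Ui i) (Ui j) ∧ Disjoint (Vi i) (Vi j))
    (Ar Br : Finset V)
    (hAr : Ar = A \ Finset.univ.biUnion Ui)
    (hBr : Br = B \ Finset.univ.biUnion Vi)
    (X : Finset V) (hXsub : X ⊆ Br)
    (hX : wsum w X > wsum w (nbhd G X Ar) ∨
      (wsum w X = wsum w (nbhd G X Ar) ∧
        ((nbhd G X Ar).filter (fun v => w v = 2)).card
          < (X.filter (fun v => w v = 2)).card)) :
    ∃ Y : Finset V, Y.card ≤ X.card * (3 * N + 1) ∧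
      (∀ x ∈ Y, ∀ y ∈ Y, ¬ G.Adj x y) ∧
      IsLocalImprovement G w A Y :=
  local_improvement_from_reduced_general G w hw A B hAB hbip h4claw N Ui Vi hVsub hcardEq hwEq hNV
    hsizeN hcons Ar Br hAr hBr X hXsub hX
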